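/- arXiv:1902.04231 — 4 statements merged into one kernel-verified Lean document; each statement's English description precedes it below -/
import Mathlib

section
/- Let p be a complex polynomial of degree n with p(1) ≠ 0. The number of zeros of p (counted with multiplicity) lying on the unit circle equals the number of real zeros (counted with multiplicity) of the transformed polynomial q_μ(X) = Σ p_k (X - i)^k (X + i)^{n-k}. -/
open Complex Polynomial

/-!
The Cayley transform `x ↦ (x - i) / (x + i)` maps `ℝ` onto the unit circle minus `1`, and
`q_μ(x) = (x + i)ⁿ p((x - i) / (x + i))`. Hence each root `r` of `p` contributes the linear factor
`(1 - r) X - i (1 + r)` to `q_μ`, whose root `i (1 + r) / (1 - r)` is real exactly when `|r| = 1`.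
Since `p(1) ≠ 0`, none of these factors degenerates to a constant, so the real roots of `q_μ`
correspond, with multiplicity, to the roots of `p` on the unit circle.
-/

/-- The Cayley-transformed polynomial `q_μ(X) = Σ p_k (X - i)^k (X + i)^{n-k}`. -/
noncomputable def qMu (p : ℂ[X]) (n : ℕ) : ℂ[X] :=
  ∑ k ∈ Finset.range (n + 1), C (p.coeff k) * (X - C I) ^ k * (X + C I) ^ (n - k)

noncomputable def invCayley (r : ℂ) : ℂ := I * (1 + r) / (1 - r)

lemma ne_of_mem_roots_of_eval_ne_zero {R : Type*} [CommRing R] [IsDomain R] {p : R[X]} {a r : R}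
    (ha : p.eval a ≠ 0) (hr : r ∈ p.roots) : r ≠ a :=
  fun h => ha (h ▸ isRoot_of_mem_roots hr)

lemma im_invCayley (r : ℂ) : (invCayley r).im = (1 - normSq r) / normSq (1 - r) := by
  rw [invCayley, div_im, div_sub_div_same]
  congr 1
  simp only [normSq_apply, mul_re, mul_im, I_re, I_im, add_re, add_im, sub_re, sub_im, one_re,
    one_im]
  ring

lemma im_invCayley_eq_zero_iff {r : ℂ} (hr : r ≠ 1) : (invCayley r).im = 0 ↔ ‖r‖ = 1 := by
  have hden : normSq (1 - r) ≠ 0 := normSq_eq_zero.not.mpr (sub_ne_zero.mpr hr.symm)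
  rw [im_invCayley, div_eq_zero_iff, or_iff_left hden, sub_eq_zero, eq_comm, ← Complex.sq_norm,
    pow_eq_one_iff_of_nonneg (norm_nonneg r) two_ne_zero]

lemma eval_qMu {p : ℂ[X]} {n : ℕ} (hn : p.natDegree ≤ n) {x : ℂ} (hx : x + I ≠ 0) :
    (qMu p n).eval x = (x + I) ^ n * p.eval ((x - I) / (x + I)) := by
  rw [qMu, eval_finsetSum, eval_eq_sum_range' (Nat.lt_succ_of_le hn), Finset.mul_sum]
  refine Finset.sum_congr rfl fun k hk => ?_
  have hkn : k ≤ n := Nat.lt_succ_iff.mp (Finset.mem_range.mp hk)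
  simp only [eval_mul, eval_pow, eval_sub, eval_add, eval_X, eval_C, div_pow]
  rw [← Nat.sub_add_cancel hkn, pow_add, Nat.sub_add_cancel hkn]
  field_simp

lemma qMu_eq_C_mul_prod {p : ℂ[X]} {n : ℕ} (hn : p.natDegree = n) :
    qMu p n = C p.leadingCoeff * (p.roots.map fun r => C (1 - r) * X - C (I * (1 + r))).prod := by
  refine eq_of_infinite_eval_eq _ _ ((Set.finite_singleton (-I)).infinite_compl.mono ?_)
  intro x hx
  have hx : x + I ≠ 0 := fun h => hx (eq_neg_of_add_eq_zero_left h)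
  have hfactor (r : ℂ) : (x + I) * ((x - I) / (x + I) - r) = (1 - r) * x - I * (1 + r) := by
    field_simp
    ring
  simp only [Set.mem_ofPred_eq, eval_qMu hn.le hx, (IsAlgClosed.splits p).eval_eq_prod_roots,
    eval_mul, eval_C, eval_multiset_prod, Multiset.map_map, Function.comp_def, eval_sub, eval_X]
  rw [← hn, ← IsAlgClosed.card_roots_eq_natDegree, ← Multiset.prod_replicate,
    ← Multiset.map_const', mul_left_comm, ← Multiset.prod_map_mul]
  simp only [hfactor]

lemma roots_qMu {p : ℂ[X]} {n : ℕ} (hn : p.natDegree = n) (h1 : p.eval 1 ≠ 0) :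
    (qMu p n).roots = p.roots.map invCayley := by
  have hp : p ≠ 0 := fun h => h1 (by simp [h])
  have hlinear {r : ℂ} (hr : r ∈ p.roots) :
      (C (1 - r) * X - C (I * (1 + r))).roots = {invCayley r} := by
    have h1r : 1 - r ≠ 0 := sub_ne_zero.mpr (ne_of_mem_roots_of_eval_ne_zero h1 hr).symm
    rw [roots_C_mul_X_sub_C _ h1r, invCayley, inv_mul_eq_div]
  have hfactor_ne_zero : (0 : ℂ[X]) ∉ p.roots.map fun r => C (1 - r) * X - C (I * (1 + r)) := by
    simp only [Multiset.mem_map, not_exists, not_and]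
    intro r hr h0
    have hroots := hlinear hr
    rw [h0, roots_zero] at hroots
    exact Multiset.singleton_ne_zero _ hroots.symm
  rw [qMu_eq_C_mul_prod hn, roots_C_mul _ (leadingCoeff_ne_zero.mpr hp),
    roots_multiset_prod _ hfactor_ne_zero, Multiset.bind_map,
    Multiset.bind_congr fun r hr => hlinear hr, Multiset.bind_singleton]

theorem qMu_count_circle_general (p : ℂ[X]) (n : ℕ) (hn : p.natDegree = n)
    (h1 : p.eval 1 ≠ 0) :
    (p.roots.filter fun z => ‖z‖ = 1).card =
      ((qMu p n).roots.filter fun z => z.im = 0).card := by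
  rw [roots_qMu hn h1, Multiset.filter_map, Multiset.card_map]
  exact congrArg _ <| Multiset.filter_congr fun r hr =>
    (im_invCayley_eq_zero_iff (ne_of_mem_roots_of_eval_ne_zero h1 hr)).symm

theorem qMu_count_circle (p : ℂ[X]) (n : ℕ) (hp : p ≠ 0) (hn : p.natDegree = n)
    (h1 : p.eval 1 ≠ 0) :
    (p.roots.filter fun z => ‖z‖ = 1).card =
      ((qMu p n).roots.filter fun z => z.im = 0).card :=
  qMu_count_circle_general p n hn h1
end

section
/- If p is a self-inversive polynomial of degree n (so p(z) = ε zⁿ conj(p)(1/z) with |ε| = 1) and p(1) ≠ 0, then the transformed polynomial q_μ(X) = Σ p_k (X - i)^k (X + i)^{n-k} satisfies q_μ = ε·conj(q_μ); in particular, if ε = 1 then q_μ has real coefficients. -/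
open Complex Polynomial

/-! Conjugation swaps `X - i` and `X + i`, so it turns `q_μ` into the same sum with the roles of
`k` and `n - k` exchanged and the coefficients conjugated; reindexing `k ↦ n - k` and the
self-inversive relation `p_{n-k} = ε · conj p_k` then give `q_μ = ε · conj q_μ`. -/

theorem Finset.sum_range_mul_pow_mul_pow_reflect {R : Type*} [CommSemiring R]
    (f : ℕ → R) (a b : R) (n : ℕ) :
    ∑ k ∈ Finset.range (n + 1), f k * a ^ k * b ^ (n - k) =
      ∑ k ∈ Finset.range (n + 1), f (n - k) * b ^ k * a ^ (n - k) := by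
  rw [← Finset.sum_range_reflect]
  refine Finset.sum_congr rfl fun k hk => ?_
  rw [Nat.add_sub_cancel, Nat.sub_sub_self (Finset.mem_range_succ_iff.mp hk)]
  ring

theorem map_conj_qMu (p : ℂ[X]) (n : ℕ) :
    (qMu p n).map (starRingEnd ℂ) =
      ∑ k ∈ Finset.range (n + 1),
        C (starRingEnd ℂ (p.coeff k)) * (X + C I) ^ k * (X - C I) ^ (n - k) := by
  simp only [qMu, Polynomial.map_sum, Polynomial.map_mul, Polynomial.map_pow, Polynomial.map_sub,
    Polynomial.map_add, map_C, map_X, conj_I, map_neg, sub_neg_eq_add, ← sub_eq_add_neg]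

theorem qMu_eq_C_mul_map_conj (p : ℂ[X]) (n : ℕ) (ε : ℂ)
    (hsi : ∀ k ≤ n, p.coeff (n - k) = ε * starRingEnd ℂ (p.coeff k)) :
    qMu p n = C ε * (qMu p n).map (starRingEnd ℂ) := by
  rw [map_conj_qMu, Finset.mul_sum, qMu, Finset.sum_range_mul_pow_mul_pow_reflect]
  refine Finset.sum_congr rfl fun k hk => ?_
  rw [hsi k (Finset.mem_range_succ_iff.mp hk), C_mul]
  ring

theorem Polynomial.im_coeff_eq_zero_of_map_conj_eq {q : ℂ[X]} (hq : q.map (starRingEnd ℂ) = q)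
    (k : ℕ) : (q.coeff k).im = 0 := by
  rw [← conj_eq_iff_im, ← coeff_map, hq]

theorem qMu_selfConjugate_general (p : ℂ[X]) (n : ℕ)
    (ε : ℂ)
    (hsi : ∀ k ≤ n, p.coeff (n - k) = ε * (starRingEnd ℂ) (p.coeff k)) :
    qMu p n = C ε * (qMu p n).map (starRingEnd ℂ) ∧
      (ε = 1 → ∀ k, ((qMu p n).coeff k).im = 0) := by
  have hq := qMu_eq_C_mul_map_conj p n ε hsi
  refine ⟨hq, fun hε1 => im_coeff_eq_zero_of_map_conj_eq ?_⟩
  rw [hε1, map_one, one_mul] at hq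
  exact hq.symm

theorem qMu_selfConjugate (p : ℂ[X]) (n : ℕ) (hn : p.natDegree = n)
    (ε : ℂ) (hε : ‖ε‖ = 1)
    (hsi : ∀ k ≤ n, p.coeff (n - k) = ε * (starRingEnd ℂ) (p.coeff k))
    (h1 : p.eval 1 ≠ 0) :
    qMu p n = C ε * (qMu p n).map (starRingEnd ℂ) ∧
      (ε = 1 → ∀ k, ((qMu p n).coeff k).im = 0) :=
  qMu_selfConjugate_general p n ε hsi
end

section
/- If p is a real polynomial of degree n with real coefficients, then the polynomial q_ω(X) = (i/2)^n · Σ p_k (-i)^k (X + 1)^k (X - 1)^{n-k} is self-adjoint, i.e., it satisfies q_ω(X) = Xⁿ·conj(q_ω)(1/X) formally (coefficients satisfy q_{n-k} = conj(q_k)). -/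
open Complex Polynomial

/-!
Self-adjointness of `q_ω` says that reversing its coefficients (`reflect n`) gives its
coefficientwise conjugate, and this holds term by term: reversal fixes `(X + 1)^k` and turns
`(X - 1)^(n-k)` into `(1 - X)^(n-k) = (-1)^(n-k) (X - 1)^(n-k)`, while conjugation fixes these
integer polynomials and, for real `p_k`, multiplies `(i/2)^n p_k (-i)^k` by
`(-1)^n (-1)^k = (-1)^(n-k)` as well.
-/

/-- The transformed polynomial `q_ω(X) = (i/2)^n Σ p_k (-i)^k (X + 1)^k (X - 1)^{n-k}`. -/
noncomputable def qOmega (p : ℂ[X]) (n : ℕ) : ℂ[X] :=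
  C ((I / 2) ^ n) *
    ∑ k ∈ Finset.range (n + 1), C (p.coeff k * (-I) ^ k) * (X + 1) ^ k * (X - 1) ^ (n - k)

namespace Polynomial

theorem reflect_sum {R ι : Type*} [Semiring R] (N : ℕ) (s : Finset ι) (f : ι → R[X]) :
    reflect N (∑ i ∈ s, f i) = ∑ i ∈ s, reflect N (f i) :=
  map_sum (⟨⟨reflect N, reflect_zero⟩, fun f g => reflect_add f g N⟩ : R[X] →+ R[X]) f s

theorem reflect_pow_of_natDegree_le {R : Type*} [CommSemiring R] {f : R[X]} {F : ℕ}
    (hf : f.natDegree ≤ F) (k : ℕ) : reflect (k * F) (f ^ k) = reflect F f ^ k := by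
  induction k with
  | zero => simp [reflect_one]
  | succ k ih =>
    rw [pow_succ, Nat.succ_mul, reflect_mul _ _ (natDegree_pow_le_of_le k hf) hf, ih, pow_succ]

variable {R : Type*} [CommRing R]

theorem reflect_X_sub_C_pow (a : R) (k : ℕ) : reflect k ((X - C a) ^ k) = (1 - C a * X) ^ k := by
  have h : reflect 1 (X - C a) = 1 - C a * X := by
    rw [reflect_sub, ← pow_one X, reflect_monomial, reflect_C]
    simp
  simpa [h] using reflect_pow_of_natDegree_le (natDegree_X_sub_C_le a) k

theorem reflect_X_add_one_pow_mul_X_sub_one_pow (k m : ℕ) :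
    reflect (k + m) ((X + 1 : R[X]) ^ k * (X - 1) ^ m) =
      C ((-1) ^ m) * ((X + 1) ^ k * (X - 1) ^ m) := by
  have h1 : (X + 1 : R[X]) = X - C (-1) := by rw [C_neg, C_1, sub_neg_eq_add]
  have h2 : (X - 1 : R[X]) = X - C 1 := by rw [C_1]
  have hdeg (a : R) (j : ℕ) : ((X - C a) ^ j).natDegree ≤ j := by
    simpa using natDegree_pow_le_of_le j (natDegree_X_sub_C_le a)
  rw [h1, h2, reflect_mul _ _ (hdeg (-1) k) (hdeg 1 m), reflect_X_sub_C_pow,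
    reflect_X_sub_C_pow]
  simp only [map_neg, map_one, map_pow, sub_neg_eq_add, neg_one_mul, one_mul]
  rw [← neg_sub X 1, neg_pow]
  ring

end Polynomial

theorem conj_I_div_two_pow_mul_neg_I_pow {a : ℂ} (ha : a.im = 0) (k m : ℕ) :
    starRingEnd ℂ ((I / 2) ^ (k + m) * a * (-I) ^ k) =
      (I / 2) ^ (k + m) * a * (-I) ^ k * (-1) ^ m := by
  simp only [map_mul, map_pow, map_div₀, map_neg, conj_I, conj_ofNat, conj_eq_iff_im.mpr ha]
  rw [neg_div, neg_pow, neg_pow I, pow_add (-1 : ℂ)]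
  ring

theorem reflect_qOmega {p : ℂ[X]} (hreal : ∀ k, (p.coeff k).im = 0) (n : ℕ) :
    reflect n (qOmega p n) = (qOmega p n).map (starRingEnd ℂ) := by
  simp only [qOmega, Finset.mul_sum, ← mul_assoc, ← C_mul, reflect_sum, Polynomial.map_sum]
  refine Finset.sum_congr rfl fun k hk => ?_
  obtain ⟨m, rfl⟩ := Nat.exists_eq_add_of_le (Finset.mem_range_succ_iff.mp hk)
  rw [Nat.add_sub_cancel_left, mul_assoc, reflect_C_mul,
    reflect_X_add_one_pow_mul_X_sub_one_pow, ← mul_assoc, ← C_mul, Polynomial.map_mul, map_C,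
    conj_I_div_two_pow_mul_neg_I_pow (hreal k)]
  simp

theorem qOmega_selfAdjoint_general (p : ℂ[X]) (n : ℕ)
    (hreal : ∀ k, (p.coeff k).im = 0) :
    ∀ k ≤ n, (qOmega p n).coeff (n - k) = (starRingEnd ℂ) ((qOmega p n).coeff k) := by
  intro k hk
  rw [← coeff_map, ← reflect_qOmega hreal, coeff_reflect, revAt_le hk]

theorem qOmega_selfAdjoint (p : ℂ[X]) (n : ℕ) (hn : p.natDegree = n)
    (hreal : ∀ k, (p.coeff k).im = 0) :
    ∀ k ≤ n, (qOmega p n).coeff (n - k) = (starRingEnd ℂ) ((qOmega p n).coeff k) :=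
  qOmega_selfAdjoint_general p n hreal
end

section
/- If z = 1 is a zero of a self-reciprocal polynomial p, then its multiplicity is even. -/
open Polynomial

private lemma reverse_pow_aux {R : Type*} [CommRing R] [NoZeroDivisors R] (f : R[X]) (m : ℕ) :
    (f ^ m).reverse = f.reverse ^ m := by
  induction m with
  | zero => simp [Polynomial.reverse]
  | succ k ih =>
    rw [pow_succ, Polynomial.reverse_mul_of_domain, ih, pow_succ]

theorem selfReciprocal_mult_at_one_even (p : ℝ[X]) (n : ℕ) (hp : p ≠ 0)
    (hn : p.natDegree = n) (hsr : ∀ k ≤ n, p.coeff (n - k) = p.coeff k)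
    (hroot : p.eval 1 = 0) :
    Even (p.rootMultiplicity 1) := by
  subst hn
  set m := p.rootMultiplicity 1 with hm
  set q := p /ₘ (X - C 1) ^ m with hq
  have hfact : (X - C (1:ℝ)) ^ m * q = p := p.pow_mul_divByMonic_rootMultiplicity_eq 1
  have hq1 : q.eval 1 ≠ 0 := p.eval_divByMonic_pow_rootMultiplicity_ne_zero 1 hp
  -- p is self-reciprocal: reverse p = p
  have hrev : p.reverse = p := by
    ext i
    rw [Polynomial.reverse, Polynomial.coeff_reflect]
    rcases le_or_gt i p.natDegree with h | h
    · rw [Polynomial.revAt_le h]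
      exact hsr i h
    · rw [Polynomial.revAt_eq_self_of_lt h]
  -- reverse (X - 1) = -(X - 1)
  have hXrev : ((X : ℝ[X]) - C 1).reverse = -(X - C 1) := by
    have hdeg : ((X : ℝ[X]) - C 1).natDegree = 1 := Polynomial.natDegree_X_sub_C (1:ℝ)
    ext i
    rw [Polynomial.reverse, Polynomial.coeff_reflect, hdeg]
    rcases i with _ | _ | i
    · simp [Polynomial.revAt_le, Polynomial.coeff_one]
    · simp [Polynomial.revAt_le, Polynomial.coeff_one]
    · rw [Polynomial.revAt_eq_self_of_lt (by omega)]
      simp [Polynomial.coeff_X, Polynomial.coeff_one, Polynomial.coeff_neg,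
        Polynomial.coeff_sub]
  have key : (X - C (1:ℝ)) ^ m * q = (X - C 1) ^ m * ((-1:ℝ[X]) ^ m * q.reverse) := by
    calc (X - C (1:ℝ)) ^ m * q = p := hfact
    _ = p.reverse := hrev.symm
    _ = ((X - C (1:ℝ)) ^ m * q).reverse := by rw [hfact]
    _ = ((X - C (1:ℝ)) ^ m).reverse * q.reverse := Polynomial.reverse_mul_of_domain _ _
    _ = (-(X - C (1:ℝ))) ^ m * q.reverse := by rw [reverse_pow_aux, hXrev]
    _ = (X - C 1) ^ m * ((-1:ℝ[X]) ^ m * q.reverse) := by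
        rw [neg_pow]; ring
  have hXne : (X - C (1:ℝ)) ^ m ≠ 0 := pow_ne_zero _ (Polynomial.X_sub_C_ne_zero 1)
  have hcancel : q = (-1:ℝ[X]) ^ m * q.reverse := mul_left_cancel₀ hXne key
  have hrevq : q.reverse.eval 1 = q.eval 1 := by
    have := @Polynomial.eval₂_reverse_mul_pow ℝ _ ℝ _ (RingHom.id ℝ) 1 invertibleOne q
    simpa [Polynomial.eval₂_eq_eval_map, invOf_one] using this
  have heq : q.eval 1 = (-1:ℝ) ^ m * q.eval 1 := by
    conv_lhs => rw [hcancel]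
    simp [hrevq]
  rcases Nat.even_or_odd m with he | ho
  · exact he
  · exfalso
    rw [ho.neg_one_pow] at heq
    apply hq1
    linarith
end
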